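/- arXiv:2405.02700 — 2 statements merged into one kernel-verified Lean document; each statement's English description precedes it below -/
import Mathlib

section
/- For any positive semidefinite symmetric matrices A, B ∈ ℝ^{d×d}, the unique PSD square roots satisfy ‖√A − √B‖₂ ≤ √(‖A − B‖₂), where ‖·‖₂ denotes the spectral (operator) norm. -/
open Matrix

/-- The spectral (ℓ₂ operator) norm of a square real matrix. -/
noncomputable def specNorm {N : ℕ} (A : Matrix (Fin N) (Fin N) ℝ) : ℝ :=
  ‖Matrix.toEuclideanCLM (𝕜 := ℝ) A‖

/-- The positive semidefinite square root of a positive semidefinite matrix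
(the definition Mathlib had as `Matrix.PosSemidef.sqrt`, since removed). -/
noncomputable def Matrix.PosSemidef.sqrt {n 𝕜 : Type*} [Fintype n] [DecidableEq n] [RCLike 𝕜]
    [PartialOrder 𝕜] [StarOrderedRing 𝕜] {A : Matrix n n 𝕜} (hA : A.PosSemidef) : Matrix n n 𝕜 :=
  hA.1.eigenvectorUnitary.1 * diagonal ((↑) ∘ Real.sqrt ∘ hA.1.eigenvalues) *
  (star hA.1.eigenvectorUnitary : Matrix n n 𝕜)

/-!
If `(√A - √B) v = μ v`, then `⟪(A - B) v, v⟫ = μ (⟪√A v, v⟫ + ⟪√B v, v⟫)`, because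
`A - B = √A (√A - √B) + (√A - √B) √B` and `√A - √B` is symmetric. Since
`μ ‖v‖² = ⟪√A v, v⟫ - ⟪√B v, v⟫` is a difference of two nonnegative numbers, the bracket is at
least `|μ| ‖v‖²`, so `μ² ≤ ‖A - B‖`. The spectral norm of the symmetric matrix `√A - √B` is the
largest `|μ|` over its eigenvalues.
-/

open Module End

namespace ContinuousLinearMap

section RCLike

variable {𝕜 E : Type*} [RCLike 𝕜] [NormedAddCommGroup E] [InnerProductSpace 𝕜 E]

theorem norm_le_of_forall_hasEigenvalue [FiniteDimensional 𝕜 E] {T : E →L[𝕜] E}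
    (hT : T.IsSymmetric) {c : ℝ} (hc : 0 ≤ c)
    (h : ∀ μ, HasEigenvalue (T : End 𝕜 E) μ → ‖μ‖ ≤ c) : ‖T‖ ≤ c := by
  have := FiniteDimensional.complete 𝕜 E
  have hρ : spectralRadius 𝕜 T ≤ ENNReal.ofReal c := by
    refine iSup₂_le fun μ hμ => ?_
    rw [spectrum_eq, ← hasEigenvalue_iff_mem_spectrum] at hμ
    rw [← ENNReal.ofReal_coe_nnreal, coe_nnnorm]
    exact ENNReal.ofReal_le_ofReal (h μ hμ)
  rwa [T.spectralRadius_eq_nnnorm hT.isSelfAdjoint, ← ENNReal.ofReal_coe_nnreal, coe_nnnorm,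
    ENNReal.ofReal_le_ofReal_iff hc] at hρ

end RCLike

section Real

variable {E : Type*} [NormedAddCommGroup E] [InnerProductSpace ℝ E]

open scoped InnerProductSpace

theorem abs_inner_apply_self_le (T : E →L[ℝ] E) (v : E) : |⟪T v, v⟫_ℝ| ≤ ‖T‖ * ‖v‖ ^ 2 :=
  calc |⟪T v, v⟫_ℝ| ≤ ‖T v‖ * ‖v‖ := abs_real_inner_le_norm _ _
    _ ≤ ‖T‖ * ‖v‖ * ‖v‖ := by gcongr; exact T.le_opNorm v
    _ = ‖T‖ * ‖v‖ ^ 2 := by ring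

theorem sq_le_norm_mul_self_sub_mul_self_of_hasEigenvalue {P Q : E →L[ℝ] E}
    (hP : P.IsPositive) (hQ : Q.IsPositive) {μ : ℝ}
    (hμ : HasEigenvalue ((P - Q : E →L[ℝ] E) : End ℝ E) μ) :
    μ ^ 2 ≤ ‖P * P - Q * Q‖ := by
  obtain ⟨v, hv⟩ := hμ.exists_hasEigenvector
  have hTv : (P - Q) v = μ • v := hv.apply_eq_smul
  set a := ⟪P v, v⟫_ℝ
  set b := ⟪Q v, v⟫_ℝ
  have ha : 0 ≤ a := hP.inner_nonneg_left v
  have hb : 0 ≤ b := hQ.inner_nonneg_left v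
  have hμab : μ * ‖v‖ ^ 2 = a - b := by
    rw [← real_inner_self_eq_norm_sq, ← real_inner_smul_left, ← hTv, _root_.sub_apply,
      inner_sub_left]
  have hPQ : P * P - Q * Q = P * (P - Q) + (P - Q) * Q := by noncomm_ring
  have hkey : ⟪(P * P - Q * Q) v, v⟫_ℝ = μ * (a + b) := by
    have hsymm : ⟪(P - Q) (Q v), v⟫_ℝ = ⟪Q v, (P - Q) v⟫_ℝ :=
      hP.isSymmetric.sub hQ.isSymmetric (Q v) v
    rw [hPQ, _root_.add_apply, mul_apply_eq_comp, mul_apply_eq_comp, inner_add_left, hTv,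
      map_smul, real_inner_smul_left, hsymm, hTv, real_inner_smul_right]
    ring
  have hv_pos : 0 < ‖v‖ ^ 2 := pow_pos (norm_pos_iff.2 hv.2) 2
  refine le_of_mul_le_mul_right ?_ hv_pos
  calc μ ^ 2 * ‖v‖ ^ 2 = |μ| * |a - b| := by
        rw [← hμab, abs_mul, abs_of_nonneg (sq_nonneg ‖v‖), ← sq_abs]; ring
    _ ≤ |μ| * (a + b) := by gcongr; exact abs_sub_le_iff.2 ⟨by linarith, by linarith⟩
    _ = |⟪(P * P - Q * Q) v, v⟫_ℝ| := by rw [hkey, abs_mul, abs_of_nonneg (add_nonneg ha hb)]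
    _ ≤ ‖P * P - Q * Q‖ * ‖v‖ ^ 2 := abs_inner_apply_self_le _ v

theorem norm_sub_le_sqrt_norm_mul_self_sub_mul_self [FiniteDimensional ℝ E] {P Q : E →L[ℝ] E}
    (hP : P.IsPositive) (hQ : Q.IsPositive) : ‖P - Q‖ ≤ √‖P * P - Q * Q‖ :=
  norm_le_of_forall_hasEigenvalue (hP.isSymmetric.sub hQ.isSymmetric) (Real.sqrt_nonneg _)
    fun _ hμ => Real.abs_le_sqrt (sq_le_norm_mul_self_sub_mul_self_of_hasEigenvalue hP hQ hμ)

end Real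

end ContinuousLinearMap

section

open scoped MatrixOrder

theorem Matrix.PosSemidef.sqrt_eq_cfcSqrt {n : Type*} [Fintype n] [DecidableEq n]
    {A : Matrix n n ℝ} (hA : A.PosSemidef) : hA.sqrt = CFC.sqrt A := by
  rw [CFC.sqrt_eq_real_sqrt A hA.nonneg, cfcₙ_eq_cfc, hA.1.cfc_eq]
  -- `IsHermitian.cfc` is the frozen definition with `conjStarAlgAut` in place of the product
  rfl

theorem Matrix.PosSemidef.posSemidef_sqrt {n : Type*} [Fintype n] [DecidableEq n]
    {A : Matrix n n ℝ} (hA : A.PosSemidef) : hA.sqrt.PosSemidef := by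
  rw [hA.sqrt_eq_cfcSqrt]
  exact (CFC.sqrt_nonneg A).posSemidef

theorem Matrix.PosSemidef.sqrt_mul_self {n : Type*} [Fintype n] [DecidableEq n]
    {A : Matrix n n ℝ} (hA : A.PosSemidef) : hA.sqrt * hA.sqrt = A := by
  rw [hA.sqrt_eq_cfcSqrt]
  exact CFC.sqrt_mul_sqrt_self A hA.nonneg

end

theorem Matrix.PosSemidef.isPositive_toEuclideanCLM {n : Type*} [Fintype n] [DecidableEq n]
    {A : Matrix n n ℝ} (hA : A.PosSemidef) : (toEuclideanCLM (𝕜 := ℝ) A).IsPositive := by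
  rw [← ContinuousLinearMap.isPositive_toLinearMap_iff, coe_toEuclideanCLM_eq_toEuclideanLin]
  exact isPositive_toEuclideanLin_iff.mpr hA

/-- For PSD symmetric matrices `A, B`, the unique PSD square roots satisfy
`‖√A − √B‖₂ ≤ √(‖A − B‖₂)` in spectral norm. -/
theorem sqrt_specNorm_holder (d : ℕ) (A B : Matrix (Fin d) (Fin d) ℝ)
    (hA : A.PosSemidef) (hB : B.PosSemidef) :
    specNorm (hA.sqrt - hB.sqrt) ≤ Real.sqrt (specNorm (A - B)) := by
  have hAB : A - B = hA.sqrt * hA.sqrt - hB.sqrt * hB.sqrt := by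
    rw [hA.sqrt_mul_self, hB.sqrt_mul_self]
  simpa only [specNorm, hAB, map_sub, map_mul] using
    ContinuousLinearMap.norm_sub_le_sqrt_norm_mul_self_sub_mul_self
      hA.posSemidef_sqrt.isPositive_toEuclideanCLM hB.posSemidef_sqrt.isPositive_toEuclideanCLM
end

section
/- (Hoffman–Wielandt) If A, B ∈ ℝ^{d×d} are symmetric matrices with eigenvalues λ_1 ≥ … ≥ λ_d and μ_1 ≥ … ≥ μ_d respectively (sorted in decreasing order), then Σ_{i=1}^d (λ_i − μ_i)² ≤ ‖A − B‖_F². -/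
open Polynomial

/-- The Frobenius norm of a real matrix. -/
noncomputable def frobNorm {m n : Type*} [Fintype m] [Fintype n]
    (A : Matrix m n ℝ) : ℝ :=
  Real.sqrt (∑ i, ∑ j, A i j ^ 2)

/-!
Diagonalize `A = U diag(λ) Uᵀ` and `B = V diag(μ) Vᵀ` with `U, V` orthogonal. Then
`‖A - B‖_F² = Σᵢⱼ Wᵢⱼ² (λᵢ - μⱼ)²` for the orthogonal matrix `W = UᵀV`, and `(Wᵢⱼ²)` is doubly
stochastic. By Birkhoff's theorem this linear expression in `(Wᵢⱼ²)` is at least its minimum over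
permutation matrices, `minσ Σᵢ (λᵢ - μσ(i))²`, and since `λ` and `μ` are sorted the same way the
rearrangement inequality puts that minimum at `σ = id`.
-/

open Matrix Finset

theorem exists_perm_eq_comp_of_map_univ_val_eq {ι α : Type*} [Fintype ι] [DecidableEq α]
    {f g : ι → α} (h : univ.val.map f = univ.val.map g) : ∃ σ : Equiv.Perm ι, f = g ∘ σ := by
  have hfiber (c : α) : Fintype.card {i // f i = c} = Fintype.card {i // g i = c} := by
    simpa [Multiset.count_map, Fintype.card_subtype, Finset.card, eq_comm] using
      congrArg (Multiset.count c) h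
  exact ⟨Equiv.ofFiberEquiv fun c => Fintype.equivOfCardEq (hfiber c),
    funext fun i => (Equiv.ofFiberEquiv_map _ i).symm⟩

theorem Polynomial.roots_prod_X_sub_C_map {ι R : Type*} [CommRing R] [IsDomain R]
    (s : Finset ι) (f : ι → R) : (∏ i ∈ s, (X - C (f i))).roots = s.val.map f := by
  rw [roots_prod _ _ (prod_ne_zero_iff.2 fun i _ => X_sub_C_ne_zero (f i))]
  simp

theorem Monovary.sum_sub_sq_le_sum_sub_comp_perm_sq {ι R : Type*} [Fintype ι] [CommRing R]
    [LinearOrder R] [IsStrictOrderedRing R] {f g : ι → R} (hfg : Monovary f g)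
    (σ : Equiv.Perm ι) : ∑ i, (f i - g i) ^ 2 ≤ ∑ i, (f i - g (σ i)) ^ 2 := by
  have hsq : ∑ i, g (σ i) ^ 2 = ∑ i, g i ^ 2 := Equiv.sum_comp σ fun i => g i ^ 2
  have hmul := hfg.sum_mul_comp_perm_le_sum_mul (σ := σ)
  simp only [sub_sq, sum_add_distrib, sum_sub_distrib, mul_assoc, ← mul_sum] at hsq hmul ⊢
  linarith

namespace Matrix

variable {m n R : Type*} [Fintype m] [Fintype n]

theorem frobNorm_eq_sqrt_trace (M : Matrix m n ℝ) : frobNorm M = √(M * Mᵀ).trace := by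
  simp [frobNorm, trace, mul_apply, sq]

theorem frobNorm_diagonal_mul_sub_mul_diagonal_sq [DecidableEq m] [DecidableEq n]
    (W : Matrix m n ℝ) (a : m → ℝ) (b : n → ℝ) :
    frobNorm (diagonal a * W - W * diagonal b) ^ 2 = ∑ i, ∑ j, W i j ^ 2 * (a i - b j) ^ 2 := by
  rw [frobNorm, Real.sq_sqrt (by positivity)]
  simp only [sub_apply, diagonal_mul, mul_diagonal]
  exact sum_congr rfl fun i _ => sum_congr rfl fun j _ => by ring

variable [DecidableEq m] [DecidableEq n]

theorem frobNorm_mul_mul_transpose_of_mem_orthogonalGroup {U : Matrix m m ℝ} {V : Matrix n n ℝ}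
    (hU : U ∈ orthogonalGroup m ℝ) (hV : V ∈ orthogonalGroup n ℝ) (M : Matrix m n ℝ) :
    frobNorm (U * M * Vᵀ) = frobNorm M := by
  rw [frobNorm_eq_sqrt_trace, frobNorm_eq_sqrt_trace, transpose_mul, transpose_mul,
    transpose_transpose]
  congr 1
  calc (U * M * Vᵀ * (V * (Mᵀ * Uᵀ))).trace = (U * (M * (Vᵀ * V) * Mᵀ) * Uᵀ).trace := by
        simp only [Matrix.mul_assoc]
    _ = (Uᵀ * U * (M * Mᵀ)).trace := by
        rw [(mem_orthogonalGroup_iff' n ℝ).1 hV, trace_mul_comm, Matrix.mul_assoc]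
        simp [Matrix.mul_assoc]
    _ = (M * Mᵀ).trace := by rw [(mem_orthogonalGroup_iff' m ℝ).1 hU, Matrix.one_mul]

theorem frobNorm_conj_diagonal_sub_conj_diagonal_sq {U V : Matrix n n ℝ}
    (hU : U ∈ orthogonalGroup n ℝ) (hV : V ∈ orthogonalGroup n ℝ) (a b : n → ℝ) :
    frobNorm (U * diagonal a * Uᵀ - V * diagonal b * Vᵀ) ^ 2 =
      ∑ i, ∑ j, (Uᵀ * V) i j ^ 2 * (a i - b j) ^ 2 := by
  have hconj : U * diagonal a * Uᵀ - V * diagonal b * Vᵀ =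
      U * (diagonal a * (Uᵀ * V) - Uᵀ * V * diagonal b) * Vᵀ := by
    simp only [Matrix.mul_sub, Matrix.sub_mul, ← Matrix.mul_assoc,
      (mem_orthogonalGroup_iff n ℝ).1 hU, Matrix.one_mul]
    simp only [Matrix.mul_assoc, (mem_orthogonalGroup_iff n ℝ).1 hV, Matrix.mul_one]
  rw [hconj, frobNorm_mul_mul_transpose_of_mem_orthogonalGroup hU hV,
    frobNorm_diagonal_mul_sub_mul_diagonal_sq]

theorem IsSymm.exists_mem_orthogonalGroup_eq_mul_diagonal_mul_transpose {A : Matrix n n ℝ}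
    (hA : A.IsSymm) {lam : n → ℝ} (hAl : A.charpoly = ∏ i, (X - C (lam i))) :
    ∃ U ∈ orthogonalGroup n ℝ, A = U * diagonal lam * Uᵀ := by
  have hH : A.IsHermitian := isHermitian_iff_isSymm.2 hA
  obtain ⟨σ, rfl⟩ : ∃ σ : Equiv.Perm n, lam = hH.eigenvalues ∘ σ := by
    refine exists_perm_eq_comp_of_map_univ_val_eq ?_
    rw [← roots_prod_X_sub_C_map, ← hAl, hH.charpoly_eq, roots_prod_X_sub_C_map]
    simp
  set U : Matrix n n ℝ := hH.eigenvectorUnitary.val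
  have hU : U ∈ orthogonalGroup n ℝ := hH.eigenvectorUnitary.2
  -- permuting the columns of `U` along `σ` reorders the eigenvalues to `lam`
  refine ⟨U.submatrix id σ, ?_, ?_⟩
  · rw [mem_orthogonalGroup_iff, transpose_submatrix, submatrix_mul_equiv,
      (mem_orthogonalGroup_iff n ℝ).1 hU, submatrix_id_id]
  · rw [← submatrix_diagonal_equiv, transpose_submatrix, Matrix.mul_assoc, submatrix_mul_equiv,
      submatrix_mul_equiv, submatrix_id_id, ← Matrix.mul_assoc]
    conv_lhs => rw [hH.spectral_theorem]
    simp [U, Unitary.conjStarAlgAut_apply, star_eq_conjTranspose]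

theorem transpose_mul_mem_orthogonalGroup [CommRing R] {U V : Matrix n n R}
    (hU : U ∈ orthogonalGroup n R) (hV : V ∈ orthogonalGroup n R) :
    Uᵀ * V ∈ orthogonalGroup n R := by
  rw [mem_orthogonalGroup_iff, transpose_mul, transpose_transpose, Matrix.mul_assoc,
    ← Matrix.mul_assoc V, (mem_orthogonalGroup_iff n R).1 hV, Matrix.one_mul,
    (mem_orthogonalGroup_iff' n R).1 hU]

theorem of_sq_mem_doublyStochastic_of_mem_orthogonalGroup [CommRing R] [LinearOrder R]
    [IsStrictOrderedRing R] {W : Matrix n n R} (hW : W ∈ orthogonalGroup n R) :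
    of (fun i j => W i j ^ 2) ∈ doublyStochastic R n := by
  refine mem_doublyStochastic_iff_sum.2 ⟨fun i j => sq_nonneg _, fun i => ?_, fun j => ?_⟩
  · simpa [mul_apply, sq] using congrFun (congrFun ((mem_orthogonalGroup_iff n R).1 hW) i) i
  · simpa [mul_apply, sq] using congrFun (congrFun ((mem_orthogonalGroup_iff' n R).1 hW) j) j

theorem le_sum_mul_of_mem_doublyStochastic [Field R] [LinearOrder R] [IsStrictOrderedRing R]
    {S : Matrix n n R} (hS : S ∈ doublyStochastic R n) {f : n → n → R} {c : R}
    (hf : ∀ σ : Equiv.Perm n, c ≤ ∑ i, f i (σ i)) : c ≤ ∑ i, ∑ j, S i j * f i j := by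
  have hlin : IsLinearMap R fun S : Matrix n n R => ∑ i, ∑ j, S i j * f i j :=
    ⟨fun S T => by simp [add_mul, sum_add_distrib], fun r S => by simp [mul_sum, mul_assoc]⟩
  rw [← SetLike.mem_coe, doublyStochastic_eq_convexHull_permMatrix] at hS
  refine convexHull_min ?_ (convex_halfSpace_ge hlin c) hS
  rintro _ ⟨σ, rfl⟩
  simpa [Equiv.Perm.permMatrix, PEquiv.toMatrix_apply, Equiv.toPEquiv_apply] using hf σ

end Matrix

/-- (Hoffman–Wielandt) If `A, B` are symmetric real matrices with eigenvalues
`λ_1 ≥ … ≥ λ_d` and `μ_1 ≥ … ≥ μ_d` counted with multiplicity (i.e. the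
characteristic polynomials factor as `∏ (X − λ_i)` and `∏ (X − μ_i)` with the
sequences sorted in decreasing order), then `Σ (λ_i − μ_i)² ≤ ‖A − B‖_F²`. -/
theorem hoffman_wielandt (d : ℕ) (A B : Matrix (Fin d) (Fin d) ℝ)
    (hA : A.IsSymm) (hB : B.IsSymm)
    (lam mu : Fin d → ℝ) (hlam : Antitone lam) (hmu : Antitone mu)
    (hAl : A.charpoly = ∏ i, (X - C (lam i)))
    (hBm : B.charpoly = ∏ i, (X - C (mu i))) :
    ∑ i, (lam i - mu i) ^ 2 ≤ frobNorm (A - B) ^ 2 := by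
  obtain ⟨U, hU, rfl⟩ := hA.exists_mem_orthogonalGroup_eq_mul_diagonal_mul_transpose hAl
  obtain ⟨V, hV, rfl⟩ := hB.exists_mem_orthogonalGroup_eq_mul_diagonal_mul_transpose hBm
  rw [frobNorm_conj_diagonal_sub_conj_diagonal_sq hU hV]
  exact le_sum_mul_of_mem_doublyStochastic
    (of_sq_mem_doublyStochastic_of_mem_orthogonalGroup (transpose_mul_mem_orthogonalGroup hU hV))
    fun σ => (hlam.monovary hmu).sum_sub_sq_le_sum_sub_comp_perm_sq σ
end
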